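/- arXiv:math/0010309 — 3 statements merged into one kernel-verified Lean document; each statement's English description precedes it below -/
import Mathlib

section
/- Let P(t) = a_0 + a_1 t + ... + a_ℓ t^ℓ be a polynomial with real coefficients. Suppose there exists a positive integer t_0 such that P(r·t_0) is an integer for all integers r. Then P(1) belongs to c_ℓ^{-1} · t_0^{-ℓ(ℓ+1)/2} · ℤ, where c_ℓ = ∏_{ℓ ≥ j > i ≥ 0} (2^j - 2^i). -/
open Finset Polynomial

private lemma two_pow_sub_ne_zero {i j : ℕ} (h : i ≠ j) : (2:ℤ)^i - 2^j ≠ 0 := by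
  rcases h.lt_or_gt with h | h
  · exact sub_ne_zero.mpr (ne_of_lt (pow_lt_pow_right₀ one_lt_two h))
  · exact sub_ne_zero.mpr (ne_of_gt (pow_lt_pow_right₀ one_lt_two h))

private lemma A_dvd_C (ℓ i : ℕ) (hi : i ∈ Finset.range (ℓ+1)) :
    (∏ j ∈ (Finset.range (ℓ+1)).erase i, ((2:ℤ)^i - 2^j)) ∣
      ∏ j ∈ Finset.range (ℓ+1), ∏ k ∈ Finset.range j, ((2:ℤ)^j - 2^k) := by
  have hi' : i < ℓ + 1 := Finset.mem_range.mp hi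
  have hsplit : (Finset.range (ℓ+1)).erase i = Finset.range i ∪ Finset.Ico (i+1) (ℓ+1) := by
    ext x
    simp only [Finset.mem_erase, Finset.mem_range, Finset.mem_union, Finset.mem_Ico]
    omega
  have hdisj : Disjoint (Finset.range i) (Finset.Ico (i+1) (ℓ+1)) := by
    simp only [Finset.disjoint_left, Finset.mem_range, Finset.mem_Ico]
    omega
  rw [← Finset.mul_prod_erase _ _ hi, hsplit, Finset.prod_union hdisj, Finset.prod_union hdisj]
  refine mul_dvd_mul dvd_rfl ?_
  refine Dvd.dvd.mul_left ?_ _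
  refine Finset.prod_dvd_prod_of_dvd _ _ fun j hj => ?_
  have hij : i ∈ Finset.range j := Finset.mem_range.mpr (by
    have := (Finset.mem_Ico.mp hj).1; omega)
  have h1 : ((2:ℤ)^j - 2^i) ∣ ∏ k ∈ Finset.range j, ((2:ℤ)^j - 2^k) :=
    Finset.dvd_prod_of_mem (fun k => (2:ℤ)^j - 2^k) hij
  rw [show (2:ℤ)^i - 2^j = -((2:ℤ)^j - 2^i) by ring, neg_dvd]
  exact h1

/-- If `P` is a real polynomial of degree at most `ℓ` and `t₀` is a
positive integer with `P (r * t₀) ∈ ℤ` for all integers `r`, then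
`P 1 ∈ c_ℓ⁻¹ · t₀^{-ℓ(ℓ+1)/2} · ℤ` where `c_ℓ = ∏_{0 ≤ i < j ≤ ℓ} (2^j - 2^i)`. -/
theorem stmt0 (ℓ : ℕ) (P : Polynomial ℝ) (hdeg : P.natDegree ≤ ℓ)
    (t₀ : ℕ) (ht₀ : 0 < t₀)
    (hint : ∀ r : ℤ, ∃ z : ℤ, P.eval ((r : ℝ) * (t₀ : ℝ)) = (z : ℝ)) :
    ∃ m : ℤ,
      P.eval 1 =
        (m : ℝ) /
          ((∏ j ∈ Finset.range (ℓ + 1), ∏ i ∈ Finset.range j,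
              ((2 : ℝ) ^ j - 2 ^ i)) * (t₀ : ℝ) ^ (ℓ * (ℓ + 1) / 2)) := by
  classical
  choose z hz using hint
  set s : Finset ℕ := Finset.range (ℓ+1) with hs
  set v : ℕ → ℝ := fun j => (2:ℝ)^j * t₀ with hv
  have ht0R : (0:ℝ) < t₀ := by exact_mod_cast ht₀
  have hvmono : StrictMono v := fun a b h => by
    exact mul_lt_mul_of_pos_right (pow_lt_pow_right₀ one_lt_two h) ht0R
  have hvinj : Set.InjOn v s := fun a _ b _ h => hvmono.injective h
  have hdeg' : P.degree < (s.card : ℕ) := by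
    rw [hs, Finset.card_range]
    calc P.degree ≤ (P.natDegree : WithBot ℕ) := Polynomial.degree_le_natDegree
    _ ≤ (ℓ : WithBot ℕ) := by exact_mod_cast hdeg
    _ < ((ℓ+1 : ℕ) : WithBot ℕ) := by exact_mod_cast Nat.lt_succ_self ℓ
  have hP := Lagrange.eq_interpolate hvinj hdeg'
  set N := ℓ * (ℓ + 1) / 2 with hN
  have hNℓ : ℓ ≤ N := by
    rw [hN]
    rcases Nat.eq_zero_or_pos ℓ with h | h
    · simp [h]
    · calc ℓ = ℓ * 2 / 2 := by omega
      _ ≤ ℓ * (ℓ + 1) / 2 := Nat.div_le_div_right (Nat.mul_le_mul_left ℓ (by omega))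
  set C : ℤ := ∏ j ∈ Finset.range (ℓ+1), ∏ k ∈ Finset.range j, ((2:ℤ)^j - 2^k) with hC
  set A : ℕ → ℤ := fun i => ∏ j ∈ s.erase i, ((2:ℤ)^i - 2^j) with hA
  have hAdvd : ∀ i ∈ s, A i ∣ C := fun i hi => A_dvd_C ℓ i hi
  have hAne : ∀ i ∈ s, A i ≠ 0 := by
    intro i hi
    rw [hA]
    refine Finset.prod_ne_zero_iff.mpr fun j hj => ?_
    exact two_pow_sub_ne_zero (Finset.mem_erase.mp hj).1.symm
  set q : ℕ → ℤ := fun i => C / A i with hq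
  have hqA : ∀ i ∈ s, A i * q i = C := fun i hi => Int.mul_ediv_cancel' (hAdvd i hi)
  refine ⟨∑ i ∈ s, z (2^i) * (∏ j ∈ s.erase i, (1 - 2^j * (t₀:ℤ))) * q i * (t₀:ℤ)^(N-ℓ), ?_⟩
  have hCR : (∏ j ∈ Finset.range (ℓ + 1), ∏ i ∈ Finset.range j, ((2 : ℝ) ^ j - 2 ^ i))
      = (C : ℝ) := by
    rw [hC]; push_cast; ring
  have hCpos : (0:ℝ) < ∏ j ∈ Finset.range (ℓ + 1), ∏ i ∈ Finset.range j, ((2 : ℝ) ^ j - 2 ^ i) := by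
    refine Finset.prod_pos fun j _ => Finset.prod_pos fun k hk => ?_
    have : (2:ℝ)^k < 2^j := pow_lt_pow_right₀ one_lt_two (Finset.mem_range.mp hk)
    linarith
  have hDne : (∏ j ∈ Finset.range (ℓ + 1), ∏ i ∈ Finset.range j,
      ((2 : ℝ) ^ j - 2 ^ i)) * (t₀ : ℝ) ^ N ≠ 0 :=
    mul_ne_zero (ne_of_gt hCpos) (pow_ne_zero _ (ne_of_gt ht0R))
  rw [eq_div_iff hDne]
  -- evaluate P at 1 via interpolation
  have heval : P.eval 1 = ∑ i ∈ s, P.eval (v i) *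
      ∏ j ∈ s.erase i, ((v i - v j)⁻¹ * (1 - v j)) := by
    conv_lhs => rw [hP]
    rw [Lagrange.interpolate_apply, Polynomial.eval_finset_sum]
    refine Finset.sum_congr rfl fun i _ => ?_
    rw [Polynomial.eval_mul, Polynomial.eval_C, Lagrange.basis, Polynomial.eval_prod]
    congr 1
    refine Finset.prod_congr rfl fun j _ => ?_
    rw [Lagrange.basisDivisor, Polynomial.eval_mul, Polynomial.eval_C,
      Polynomial.eval_sub, Polynomial.eval_X, Polynomial.eval_C]
  rw [heval, Finset.sum_mul]
  push_cast
  refine Finset.sum_congr rfl fun i hi => ?_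
  -- each term
  have hyi : P.eval (v i) = (z (2^i) : ℝ) := by
    have := hz (2^i)
    rw [hv]
    simpa using this
  have hcard : (s.erase i).card = ℓ := by
    rw [Finset.card_erase_of_mem hi, hs, Finset.card_range]
    omega
  have hprodset : ∏ j ∈ s.erase i, (v i - v j) = (A i : ℝ) * (t₀:ℝ)^ℓ := by
    rw [← hcard, ← Finset.prod_const, hA]
    push_cast
    rw [← Finset.prod_mul_distrib]
    refine Finset.prod_congr rfl fun j _ => ?_
    rw [hv]; ring
  have hprod : ∏ j ∈ s.erase i, ((v i - v j)⁻¹ * (1 - v j))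
      = ((A i : ℝ) * (t₀:ℝ)^ℓ)⁻¹ * ∏ j ∈ s.erase i, (1 - v j) := by
    rw [Finset.prod_mul_distrib, Finset.prod_inv_distrib, hprodset]
  have hprod2 : ∏ j ∈ s.erase i, (1 - v j)
      = ((∏ j ∈ s.erase i, (1 - 2^j * (t₀:ℤ)) : ℤ) : ℝ) := by
    push_cast
    refine Finset.prod_congr rfl fun j _ => ?_
    rw [hv]
  have hAneR : ((A i : ℝ)) ≠ 0 := by exact_mod_cast hAne i hi
  have hCq : (C : ℝ) = (A i : ℝ) * (q i : ℝ) := by exact_mod_cast (hqA i hi).symm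
  have htow : (t₀:ℝ)^N = (t₀:ℝ)^ℓ * (t₀:ℝ)^(N-ℓ) := by
    rw [← pow_add]; congr 1; omega
  rw [hyi, hprod, hprod2, hCR, hCq, htow]
  have htne : (t₀:ℝ)^ℓ ≠ 0 := pow_ne_zero _ (ne_of_gt ht0R)
  push_cast
  field_simp
  ring
end

section
/- Let P(t) = a_0 + a_1 t + ... + a_ℓ t^ℓ be a real polynomial and t_0 a positive integer such that P(2^k · t_0) ∈ ℤ for k = 0, 1, ..., ℓ. Then each coefficient a_j lies in c_ℓ^{-1} · t_0^{-ℓ(ℓ+1)/2} · ℤ, where c_ℓ = ∏_{ℓ ≥ j > i ≥ 0} (2^j - 2^i). -/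
open Finset Matrix Polynomial

lemma prod_Iio_fin {M : Type*} [CommMonoid M] {n : ℕ} (b : Fin n) (f : ℕ → M) :
    ∏ i ∈ Finset.Iio b, f (i : ℕ) = ∏ i ∈ Finset.range (b : ℕ), f i := by
  rw [← Nat.Iio_eq_range, ← Fin.map_valEmbedding_Iio, Finset.prod_map]
  rfl

lemma prod_pairs {M : Type*} [CommMonoid M] (n : ℕ) (f : ℕ → ℕ → M) :
    ∏ i : Fin n, ∏ j ∈ Finset.Ioi i, f (i : ℕ) (j : ℕ)
      = ∏ j ∈ Finset.range n, ∏ i ∈ Finset.range j, f i j := by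
  rw [Finset.prod_comm' (s' := fun j : Fin n => Finset.Iio j) (t' := Finset.univ)
    (by intro i j; simp [Finset.mem_Ioi, Finset.mem_Iio, and_comm])]
  rw [← Fin.prod_univ_eq_prod_range (fun j => ∏ i ∈ Finset.range j, f i j)]
  exact Finset.prod_congr rfl fun j _ => prod_Iio_fin j (fun i => f i j)

lemma sum_Ioi_card (n : ℕ) :
    ∑ i : Fin n, (Finset.Ioi i).card = n * (n - 1) / 2 := by
  simp only [Fin.card_Ioi]
  rw [Fin.sum_univ_eq_sum_range (fun i => n - 1 - i), Finset.sum_range_reflect (fun j => j) n,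
    Finset.sum_range_id]

/-- If `P` is a real polynomial of degree at most `ℓ`, `t₀` a positive
integer, and `P (2^k · t₀) ∈ ℤ` for `k = 0, 1, …, ℓ`, then every coefficient of `P`
lies in `c_ℓ⁻¹ · t₀^{-ℓ(ℓ+1)/2} · ℤ`, where `c_ℓ = ∏_{0 ≤ i < j ≤ ℓ} (2^j - 2^i)`. -/
theorem stmt1 (ℓ : ℕ) (P : Polynomial ℝ) (hdeg : P.natDegree ≤ ℓ)
    (t₀ : ℕ) (ht₀ : 0 < t₀)
    (hint : ∀ k ≤ ℓ, ∃ z : ℤ, P.eval ((2 : ℝ) ^ k * (t₀ : ℝ)) = (z : ℝ)) :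
    ∀ j : ℕ, ∃ m : ℤ,
      P.coeff j =
        (m : ℝ) /
          ((∏ j ∈ Finset.range (ℓ + 1), ∏ i ∈ Finset.range j,
              ((2 : ℝ) ^ j - 2 ^ i)) * (t₀ : ℝ) ^ (ℓ * (ℓ + 1) / 2)) := by
  intro j
  set n := ℓ + 1 with hn
  set C : ℝ := ∏ j ∈ Finset.range n, ∏ i ∈ Finset.range j, ((2 : ℝ) ^ j - 2 ^ i) with hC
  set D : ℝ := C * (t₀ : ℝ) ^ (ℓ * (ℓ + 1) / 2) with hD
  have hCne : C ≠ 0 := by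
    rw [hC]
    apply Finset.prod_ne_zero_iff.2
    intro b _
    apply Finset.prod_ne_zero_iff.2
    intro i hi
    have : (2:ℝ)^i < 2^b := pow_lt_pow_right₀ one_lt_two (Finset.mem_range.mp hi)
    exact sub_ne_zero.mpr (ne_of_gt this)
  have hDne : D ≠ 0 := by
    apply mul_ne_zero hCne
    exact pow_ne_zero _ (by exact_mod_cast ht₀.ne')
  by_cases hj : j ≤ ℓ
  swap
  · refine ⟨0, ?_⟩
    rw [Polynomial.coeff_eq_zero_of_natDegree_lt (lt_of_le_of_lt hdeg (not_le.mp hj))]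
    simp
  -- integers at the sample points
  have hz : ∀ k : Fin n, ∃ z : ℤ, P.eval ((2:ℝ)^(k:ℕ) * (t₀:ℝ)) = (z:ℝ) :=
    fun k => hint k (Nat.lt_succ_iff.mp k.isLt)
  choose z hzv using hz
  set v : Fin n → ℝ := fun k => (2:ℝ)^(k:ℕ) * (t₀:ℝ) with hv
  set V : Matrix (Fin n) (Fin n) ℝ := Matrix.vandermonde v with hV
  set W : Matrix (Fin n) (Fin n) ℤ := Matrix.vandermonde (fun k => 2^(k:ℕ) * (t₀:ℤ)) with hW
  have hVW : V = W.map (Int.cast) := by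
    ext k i
    simp [hV, hW, Matrix.vandermonde_apply, hv]
  set a : Fin n → ℝ := fun i => P.coeff i with ha
  have h1 : V.mulVec a = fun k => (z k : ℝ) := by
    funext k
    have := hzv k
    rw [Polynomial.eval_eq_sum_range' (Nat.lt_succ_of_le hdeg)] at this
    simp only [Matrix.mulVec, dotProduct, hV, Matrix.vandermonde_apply, ha]
    rw [Fin.sum_univ_eq_sum_range (fun i => v ⟨k, k.isLt⟩ ^ i * P.coeff i) n, ← this]
    exact Finset.sum_congr rfl fun i _ => mul_comm _ _
  have key : V.adjugate.mulVec (fun k => (z k : ℝ)) = V.det • a := by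
    rw [← h1, Matrix.mulVec_mulVec, Matrix.adjugate_mul, Matrix.smul_mulVec,
      Matrix.one_mulVec]
  set N : Fin n → ℤ := W.adjugate.mulVec z with hN
  have hcast : ∀ i : Fin n, (N i : ℝ) = V.adjugate.mulVec (fun k => (z k : ℝ)) i := by
    intro i
    rw [hVW, show (W.map (Int.cast : ℤ → ℝ)) = (Int.castRingHom ℝ).mapMatrix W from rfl,
      ← (Int.castRingHom ℝ).map_adjugate]
    simp [hN, Matrix.mulVec, dotProduct, Matrix.map_apply]
  -- determinant computation
  have hdet : V.det = D := by
    rw [hV, Matrix.det_vandermonde]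
    have step1 : ∀ i : Fin n, ∀ jj ∈ Finset.Ioi i, v jj - v i
        = ((2:ℝ)^(jj:ℕ) - 2^(i:ℕ)) * (t₀:ℝ) := by
      intro i jj _
      simp [hv]
      ring
    calc ∏ i : Fin n, ∏ jj ∈ Finset.Ioi i, (v jj - v i)
        = ∏ i : Fin n, ∏ jj ∈ Finset.Ioi i, ((2:ℝ)^(jj:ℕ) - 2^(i:ℕ)) * (t₀:ℝ) :=
          Finset.prod_congr rfl fun i _ => Finset.prod_congr rfl fun jj hjj => step1 i jj hjj
      _ = (∏ i : Fin n, ∏ jj ∈ Finset.Ioi i, ((2:ℝ)^(jj:ℕ) - 2^(i:ℕ)))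
            * ∏ i : Fin n, ∏ _jj ∈ Finset.Ioi i, (t₀:ℝ) := by
          rw [← Finset.prod_mul_distrib]
          exact Finset.prod_congr rfl fun i _ => Finset.prod_mul_distrib
      _ = C * ∏ i : Fin n, (t₀:ℝ) ^ (Finset.Ioi i).card := by
          rw [prod_pairs n (fun i j => (2:ℝ)^j - 2^i), ← hC]
          simp [Finset.prod_const]
      _ = C * (t₀:ℝ) ^ (ℓ * (ℓ + 1) / 2) := by
          rw [Finset.prod_pow_eq_pow_sum, sum_Ioi_card n]
          have h2 : n * (n - 1) / 2 = ℓ * (ℓ + 1) / 2 := by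
            rw [hn, Nat.add_sub_cancel, Nat.mul_comm]
          rw [h2]
  -- conclude
  have hjn : j < n := Nat.lt_succ_of_le hj
  refine ⟨N ⟨j, hjn⟩, ?_⟩
  have := congrFun key ⟨j, hjn⟩
  rw [← hcast ⟨j, hjn⟩] at this
  have haj : a ⟨j, hjn⟩ = P.coeff j := rfl
  rw [eq_div_iff hDne, ← hdet]
  simp only [Pi.smul_apply, smul_eq_mul, haj] at this
  rw [mul_comm]
  exact this.symm
end

section
/- Combining the previous two facts: let R be a commutative ℚ-algebra, ω ∈ R with ω^{ℓ+1} = 0, x ∈ R, and φ : R → ℝ a ℚ-linear map. Suppose there is a positive integer q such that φ(exp(rqω)·x) ∈ ℤ for every integer r. Then φ(exp(ω)·x) ∈ c_ℓ^{-1} q^{-ℓ(ℓ+1)/2} ℤ, where c_ℓ = ∏_{0 ≤ i < j ≤ ℓ}(2^j - 2^i). -/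
open Finset Matrix

private lemma stmt14_reindex (n : ℕ) (f : ℕ → ℕ → ℝ) :
    ∏ i : Fin n, ∏ j ∈ Finset.Ioi i, f i j =
      ∏ j ∈ Finset.range n, ∏ i ∈ Finset.range j, f i j := by
  rw [Finset.prod_comm' (t' := (Finset.univ : Finset (Fin n))) (s' := fun j => Finset.Iio j)
    (fun i j => by simp)]
  have h1 : ∀ j : Fin n, ∏ i ∈ Finset.Iio j, f i j = ∏ i ∈ Finset.range (j : ℕ), f i (j : ℕ) := by
    intro j
    rw [← Nat.Iio_eq_range, ← Fin.map_valEmbedding_Iio, Finset.prod_map]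
    rfl
  simp_rw [h1]
  exact Fin.prod_univ_eq_prod_range (fun j => ∏ i ∈ Finset.range j, f i j) n

/-- Let `R` be a commutative `ℚ`-algebra, `ω ∈ R` with `ω^{ℓ+1} = 0`,
`x ∈ R`, and `φ : R → ℝ` a `ℚ`-linear map. If there is a positive integer `q` such
that `φ (exp(rqω) · x) ∈ ℤ` for every integer `r`, then
`φ (exp(ω) · x) ∈ c_ℓ⁻¹ · q^{-ℓ(ℓ+1)/2} · ℤ`, where
`c_ℓ = ∏_{0 ≤ i < j ≤ ℓ} (2^j - 2^i)` and `exp(ω) = ∑_{j=0}^{ℓ} ω^j / j!`. -/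
theorem stmt14 (R : Type*) [CommRing R] [Algebra ℚ R]
    (ℓ : ℕ) (ω : R) (hω : ω ^ (ℓ + 1) = 0) (x : R) (φ : R →ₗ[ℚ] ℝ)
    (q : ℕ) (hq : 0 < q)
    (hint : ∀ r : ℤ, ∃ z : ℤ,
      φ ((∑ j ∈ Finset.range (ℓ + 1),
            (((r : ℚ) * (q : ℚ)) ^ j / (Nat.factorial j : ℚ)) • ω ^ j) * x) = (z : ℝ)) :
    ∃ m : ℤ,
      φ ((∑ j ∈ Finset.range (ℓ + 1),
            ((1 : ℚ) / (Nat.factorial j : ℚ)) • ω ^ j) * x) =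
        (m : ℝ) /
          ((∏ j ∈ Finset.range (ℓ + 1), ∏ i ∈ Finset.range j,
              ((2 : ℝ) ^ j - 2 ^ i)) * (q : ℝ) ^ (ℓ * (ℓ + 1) / 2)) := by
  set n := ℓ + 1 with hn
  -- the real coefficients
  set g : ℕ → ℝ := fun j => φ (ω ^ j * x) with hg
  have key : ∀ r : ℚ,
      φ ((∑ j ∈ Finset.range n, (r ^ j / (Nat.factorial j : ℚ)) • ω ^ j) * x) =
        ∑ j ∈ Finset.range n, ((r : ℝ) ^ j / (Nat.factorial j : ℝ)) * g j := by
    intro r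
    rw [Finset.sum_mul, map_sum]
    refine Finset.sum_congr rfl fun j _ => ?_
    rw [smul_mul_assoc, LinearMap.map_smul _ _ _, Rat.smul_def]
    push_cast
    ring
  -- the vector a
  set a : Fin n → ℝ := fun k => (1 / (Nat.factorial (k : ℕ) : ℝ)) * g k with ha
  -- the integer vandermonde matrix
  set v : Fin n → ℝ := fun i => 2 ^ (i : ℕ) * q with hv
  set W : Matrix (Fin n) (Fin n) ℤ := Matrix.vandermonde (fun i => 2 ^ (i : ℕ) * q) with hW
  set Wr : Matrix (Fin n) (Fin n) ℝ := Matrix.vandermonde v with hWr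
  have hmap : W.map (Int.cast : ℤ → ℝ) = Wr := by
    ext i j
    simp only [hW, hWr, Matrix.map_apply, Matrix.vandermonde_apply, hv]
    push_cast
    ring
  -- choose the integer values
  choose z hz using fun i : Fin n => hint (2 ^ (i : ℕ))
  have hWa : Wr.mulVec a = fun i => (z i : ℝ) := by
    funext i
    have hzi := hz i
    push_cast at hzi
    have hk := key (((2 : ℤ) ^ (i : ℕ) : ℤ) * (q : ℚ))
    push_cast at hk
    rw [← hzi, hk, Matrix.mulVec, dotProduct,
      ← Fin.sum_univ_eq_sum_range
        (fun j => ((2 : ℝ) ^ (i : ℕ) * (q : ℝ)) ^ j / ((Nat.factorial j : ℕ) : ℝ) * g j) n]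
    refine Finset.sum_congr rfl fun k _ => ?_
    simp only [hWr, Matrix.vandermonde_apply, hv, ha]
    ring
  -- the main linear algebra step
  set m : ℤ := ∑ k : Fin n, ∑ i : Fin n, W.adjugate k i * z i with hm
  have hadj : Wr.adjugate = W.adjugate.map (Int.cast : ℤ → ℝ) := by
    rw [← hmap]
    exact ((Int.castRingHom ℝ).map_adjugate W).symm
  have hdet : Wr.det * ∑ k : Fin n, a k = (m : ℝ) := by
    have h1 : Wr.adjugate.mulVec (Wr.mulVec a) = Wr.det • a := by
      rw [Matrix.mulVec_mulVec, Matrix.adjugate_mul, Matrix.smul_mulVec,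
        Matrix.one_mulVec]
    calc Wr.det * ∑ k : Fin n, a k = ∑ k : Fin n, (Wr.det • a) k := by
          rw [Finset.mul_sum]; rfl
      _ = ∑ k : Fin n, (Wr.adjugate.mulVec (Wr.mulVec a)) k := by rw [h1]
      _ = (m : ℝ) := by
          rw [hWa, hm]
          push_cast
          refine Finset.sum_congr rfl fun k _ => ?_
          rw [Matrix.mulVec, dotProduct]
          refine Finset.sum_congr rfl fun i _ => ?_
          rw [hadj]
          rfl
  -- compute the determinant
  have hdetval : Wr.det =
      (∏ j ∈ Finset.range n, ∏ i ∈ Finset.range j, ((2 : ℝ) ^ j - 2 ^ i)) *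
        (q : ℝ) ^ (ℓ * (ℓ + 1) / 2) := by
    rw [hWr, Matrix.det_vandermonde]
    have : ∀ i : Fin n, ∀ j ∈ Finset.Ioi i, v j - v i = ((2:ℝ) ^ (j:ℕ) - 2 ^ (i:ℕ)) * q := by
      intro i j _
      simp only [hv]
      ring
    rw [Finset.prod_congr rfl fun i _ => Finset.prod_congr rfl (this i)]
    rw [stmt14_reindex n (fun i j => ((2:ℝ) ^ j - 2 ^ i) * (q : ℝ))]
    rw [Finset.prod_congr rfl fun j _ => Finset.prod_mul_distrib]
    rw [Finset.prod_mul_distrib]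
    congr 1
    rw [Finset.prod_congr rfl fun j (_ : j ∈ Finset.range n) => Finset.prod_const (q:ℝ)]
    simp only [Finset.card_range]
    rw [Finset.prod_pow_eq_pow_sum]
    congr 1
    rw [Finset.sum_range_id]
    show (ℓ + 1) * (ℓ + 1 - 1) / 2 = ℓ * (ℓ + 1) / 2
    rw [Nat.add_sub_cancel, Nat.mul_comm]
  -- positivity of the denominator
  have hpos : (0:ℝ) <
      (∏ j ∈ Finset.range n, ∏ i ∈ Finset.range j, ((2 : ℝ) ^ j - 2 ^ i)) *
        (q : ℝ) ^ (ℓ * (ℓ + 1) / 2) := by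
    apply mul_pos
    · apply Finset.prod_pos
      intro j _
      apply Finset.prod_pos
      intro i hi
      have : (2:ℝ) ^ i < 2 ^ j := by
        apply pow_lt_pow_right₀ (by norm_num) (Finset.mem_range.mp hi)
      linarith
    · exact pow_pos (by exact_mod_cast hq) _
  refine ⟨m, ?_⟩
  have htarget : φ ((∑ j ∈ Finset.range n, ((1 : ℚ) / (Nat.factorial j : ℚ)) • ω ^ j) * x) =
      ∑ k : Fin n, a k := by
    have hk := key 1
    push_cast at hk
    simp only [one_pow, one_div] at hk ⊢
    rw [hk, ← Fin.sum_univ_eq_sum_range (fun j => ((Nat.factorial j : ℕ) : ℝ)⁻¹ * g j) n]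
    refine Finset.sum_congr rfl fun k _ => ?_
    simp only [ha, one_div]
  rw [htarget, eq_div_iff (ne_of_gt hpos)]
  rw [← hdetval, mul_comm, hdet]
end
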